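/- arXiv:1810.02881 — 7 statements merged into one kernel-verified Lean document; each statement's English description precedes it below -/
import Mathlib

section
/- Let k < p be positive integers and d_V = pk − k(k+1)/2. The vectorized Cayley transform φ ↦ vec(C(X_φ)), viewed as a map from ℝ^{d_V} to ℝ^{pk}, is continuously differentiable on all of ℝ^{d_V}, with derivative matrix DC(φ) = 2[ I_{p×k}ᵀ (I_p − X_φ)^{−T} ⊗ (I_p − X_φ)^{−1} ] Γ_V, where ⊗ denotes the Kronecker product and Γ_V = [ (Θ₁ᵀ ⊗ Θ₁ᵀ) D̃_k , (I_{p²} − K_{p,p})(Θ₁ᵀ ⊗ Θ₂ᵀ) ]. -/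
open Matrix MeasureTheory Filter
open scoped Kronecker ENNReal

noncomputable section

/-- The `p × k` matrix whose top `k × k` block is the identity and whose
remaining entries are zero. -/
def Ipk (p k : ℕ) : Matrix (Fin p) (Fin k) ℝ :=
  Matrix.of fun i j => if (i : ℕ) = (j : ℕ) then 1 else 0

/-- The (modified) Cayley transform `C(X) = (I + X)(I - X)⁻¹ I_{p×k}`. -/
def cayley (p k : ℕ) (X : Matrix (Fin p) (Fin p) ℝ) : Matrix (Fin p) (Fin k) ℝ :=
  (1 + X) * (1 - X)⁻¹ * Ipk p k

/-- Top `k × k` block of a `p × k` matrix. -/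
def topBlock {p k : ℕ} (h : k ≤ p) (Q : Matrix (Fin p) (Fin k) ℝ) :
    Matrix (Fin k) (Fin k) ℝ :=
  Q.submatrix (Fin.castLE h) id

/-- Bottom `(p-k) × k` block of a `p × k` matrix. -/
def botBlock {p k : ℕ} (h : k ≤ p) (Q : Matrix (Fin p) (Fin k) ℝ) :
    Matrix (Fin (p - k)) (Fin k) ℝ :=
  Q.submatrix (fun i => ⟨k + i.1, by have := i.isLt; omega⟩) id

/-- The skew-symmetric block matrix `[[B, -Aᵀ], [A, 0]]` as a `p × p` matrix. -/
def blockX {p k : ℕ} (h : k ≤ p) (B : Matrix (Fin k) (Fin k) ℝ)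
    (A : Matrix (Fin (p - k)) (Fin k) ℝ) : Matrix (Fin p) (Fin p) ℝ :=
  (Matrix.fromBlocks B (-Aᵀ) A 0).submatrix
    (fun i => finSumFinEquiv.symm (Fin.cast (by omega) i))
    (fun j => finSumFinEquiv.symm (Fin.cast (by omega) j))

/-- Position of the strictly subdiagonal entry `(i, j)` (`j < i`) of a `k × k`
matrix in the column-major enumeration of the strictly subdiagonal entries. -/
def lowIdx (k i j : ℕ) : ℕ := j * k + i - (j + 1) * (j + 2) / 2

/-- The `k × k` skew-symmetric matrix whose strictly subdiagonal entries, in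
column-major order, are given by `b`. -/
def skewOfVec (k : ℕ) (b : Fin (k * (k - 1) / 2) → ℝ) : Matrix (Fin k) (Fin k) ℝ :=
  Matrix.of fun i j =>
    if (j : ℕ) < (i : ℕ) then
      if h : lowIdx k i j < k * (k - 1) / 2 then b ⟨lowIdx k i j, h⟩ else 0
    else if (i : ℕ) < (j : ℕ) then
      if h : lowIdx k j i < k * (k - 1) / 2 then -b ⟨lowIdx k j i, h⟩ else 0
    else 0

/-- The vector of strictly subdiagonal entries of a `k × k` matrix, in
column-major order. -/
def subdiagVec {k : ℕ} (M : Matrix (Fin k) (Fin k) ℝ) : Fin (k * (k - 1) / 2) → ℝ :=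
  fun t => ∑ i : Fin k, ∑ j : Fin k,
    if (j : ℕ) < (i : ℕ) ∧ lowIdx k (i : ℕ) (j : ℕ) = (t : ℕ) then M i j else 0

/-- Column-major vectorization of an `a × b` matrix, indexed by
(column, row) pairs. -/
def vecP {a b : ℕ} (M : Matrix (Fin a) (Fin b) ℝ) : Fin b × Fin a → ℝ :=
  fun q => M q.2 q.1

/-- The max-norm of a matrix: the maximum of the absolute values of its
entries. -/
def maxNorm {a b : ℕ} (M : Matrix (Fin a) (Fin b) ℝ) : ℝ :=
  ⨆ q : Fin a × Fin b, |M q.1 q.2|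

/-- The Frobenius norm of a matrix. -/
def frobNorm {a b : ℕ} (M : Matrix (Fin a) (Fin b) ℝ) : ℝ :=
  Real.sqrt (∑ i, ∑ j, (M i j) ^ 2)


/-- `Θ₁ = [I_k 0]`, a `k × p` matrix. -/
def Theta1 (p k : ℕ) : Matrix (Fin k) (Fin p) ℝ := (Ipk p k)ᵀ

/-- `Θ₂ = [0 I_{p-k}]`, a `(p-k) × p` matrix. -/
def Theta2 (p k : ℕ) : Matrix (Fin (p - k)) (Fin p) ℝ :=
  Matrix.of fun i j => if (k + i.1 : ℕ) = (j : ℕ) then 1 else 0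

/-- The matrix `Γ_V = [(Θ₁ᵀ ⊗ Θ₁ᵀ) D̃_k, (I_{p²} - K_{p,p})(Θ₁ᵀ ⊗ Θ₂ᵀ)]`. -/
def GammaV (p k : ℕ) (K : Matrix (Fin p × Fin p) (Fin p × Fin p) ℝ)
    (Dt : Matrix (Fin k × Fin k) (Fin (k * (k - 1) / 2)) ℝ) :
    Matrix (Fin p × Fin p) (Fin (k * (k - 1) / 2) ⊕ (Fin k × Fin (p - k))) ℝ :=
  Matrix.fromCols (((Theta1 p k)ᵀ ⊗ₖ (Theta1 p k)ᵀ) * Dt)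
    ((1 - K) * ((Theta1 p k)ᵀ ⊗ₖ (Theta2 p k)ᵀ))

/-- The matrix `X_φ = [[B(b), -Aᵀ],[A, 0]]` built from the Euclidean
parameter `φ = (b, vec A)`. -/
def Xphi (p k : ℕ) (h : k ≤ p)
    (φ : (Fin (k * (k - 1) / 2) ⊕ (Fin k × Fin (p - k))) → ℝ) :
    Matrix (Fin p) (Fin p) ℝ :=
  blockX h (skewOfVec k (φ ∘ Sum.inl))
    (Matrix.of fun i j => φ (Sum.inr (j, i)))

/-!
`X_φ` is skew-symmetric, so `1 - X_φ` is invertible for every `φ` (`vᵀ(1 - X)v = vᵀv`). Since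
`(1 + X)(1 - X)⁻¹ = 2(1 - X)⁻¹ - 1`, the Cayley map is smooth there with derivative
`H ↦ 2 (1 - X)⁻¹ H (1 - X)⁻¹`. The parametrisation `φ ↦ X_φ` is linear with matrix `Γ_V`:
`D̃_k` rebuilds the skew block `B(b)` from `b`, `I - K_{p,p}` turns `vec (Θ₂ᵀ A Θ₁)` into the
vectorization of `Θ₂ᵀ A Θ₁ - Θ₁ᵀ Aᵀ Θ₂`, and `X_φ = Θ₁ᵀ B Θ₁ + Θ₂ᵀ A Θ₁ - Θ₁ᵀ Aᵀ Θ₂`.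
The chain rule and `vec (A X B) = (Bᵀ ⊗ A) vec X` give the formula.
-/

section SubdiagonalIndex

variable {k i j : ℕ}

lemma two_mul_lowIdx (hji : j < i) (hik : i < k) :
    2 * (lowIdx k i j : ℤ) = 2 * (j * k + i) - (j + 1) * (j + 2) := by
  obtain ⟨m, hm⟩ : Even ((j + 1) * (j + 2)) := Nat.even_mul_succ_self (j + 1)
  have hle : (j + 1) * (j + 2) ≤ 2 * (j * k + i) := by nlinarith
  have hm' : ((j : ℤ) + 1) * (j + 2) = m + m := by exact_mod_cast hm
  have : lowIdx k i j = j * k + i - m := by unfold lowIdx; omega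
  rw [this, Nat.cast_sub (by omega), hm']
  push_cast
  ring

lemma lowIdx_lt (hji : j < i) (hik : i < k) : lowIdx k i j < k * (k - 1) / 2 := by
  obtain ⟨m, hm⟩ : Even (k * (k - 1)) := Nat.even_mul_pred_self k
  have hm' : (k : ℤ) * (k - 1) = m + m := by
    rw [← Nat.cast_pred (by omega)]; exact_mod_cast hm
  have : (lowIdx k i j : ℤ) < m := by
    nlinarith [two_mul_lowIdx hji hik, sq_nonneg ((k : ℤ) - j - 2)]
  omega

lemma lowIdx_lt_lowIdx {i' j' : ℕ} (hji : j < i) (hik : i < k) (hji' : j' < i') (hik' : i' < k)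
    (h : j < j' ∨ j = j' ∧ i < i') : lowIdx k i j < lowIdx k i' j' := by
  have h₁ := two_mul_lowIdx hji hik
  have h₂ := two_mul_lowIdx hji' hik'
  suffices (lowIdx k i j : ℤ) < lowIdx k i' j' by exact_mod_cast this
  rcases h with h | ⟨rfl, h⟩
  · nlinarith [mul_le_mul_of_nonneg_left (show (j' : ℤ) + 1 ≤ k by omega)
      (show (0 : ℤ) ≤ j' - j - 1 by omega)]
  · omega

end SubdiagonalIndex

open Finset

def lowerPairs (k : ℕ) : Finset (Fin k × Fin k) := {q | q.2 < q.1}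

lemma card_lowerPairs (k : ℕ) : #(lowerPairs k) = k * (k - 1) / 2 := by
  rw [lowerPairs, card_filter, Fintype.sum_prod_type]
  simp only [← card_filter, filter_gt_eq_Iio, Fin.card_Iio]
  rw [Fin.sum_univ_eq_sum_range (fun i => i), sum_range_id]

lemma lowIdx_injOn (k : ℕ) :
    Set.InjOn (fun q : Fin k × Fin k => lowIdx k q.1 q.2) (lowerPairs k) := by
  rintro ⟨i, j⟩ hq ⟨i', j'⟩ hq' h
  simp only [lowerPairs, coe_filter, mem_univ, true_and, Set.mem_ofPred_eq] at hq hq' h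
  have hlt := lowIdx_lt_lowIdx hq i.2 hq' i'.2
  have hgt := lowIdx_lt_lowIdx hq' i'.2 hq i.2
  suffices (i : ℕ) = i' ∧ (j : ℕ) = j' by simp [Fin.ext_iff, this]
  omega

lemma image_lowIdx_lowerPairs (k : ℕ) :
    (lowerPairs k).image (fun q => lowIdx k q.1 q.2) = range (k * (k - 1) / 2) := by
  refine eq_of_subset_of_card_le (fun t ht => ?_) ?_
  · obtain ⟨q, hq, rfl⟩ := mem_image.1 ht
    exact mem_range.2 (lowIdx_lt (mem_filter.1 hq).2 q.1.2)
  · rw [card_range, card_image_of_injOn (lowIdx_injOn k), card_lowerPairs]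

lemma subdiagVec_skewOfVec (k : ℕ) (b : Fin (k * (k - 1) / 2) → ℝ) :
    subdiagVec (skewOfVec k b) = b := by
  funext t
  have ht : (t : ℕ) ∈ (lowerPairs k).image (fun q => lowIdx k q.1 q.2) := by
    rw [image_lowIdx_lowerPairs]
    exact mem_range.2 t.2
  obtain ⟨q, hq, hqt⟩ := mem_image.1 ht
  have hq' : q.2 < q.1 := (mem_filter.1 hq).2
  have huniq : ∀ i j : Fin k, (j : ℕ) < i ∧ lowIdx k i j = t ↔ (i, j) = q := by
    refine fun i j => ⟨fun h => lowIdx_injOn k (by simpa [lowerPairs] using h.1) hq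
      (h.2.trans hqt.symm), ?_⟩
    rintro ⟨⟩
    exact ⟨hq', hqt⟩
  simp only [subdiagVec, huniq, ← Fintype.sum_prod_type', Prod.mk.eta, Finset.sum_ite_eq',
    mem_univ, if_true]
  simp [skewOfVec, hq', hqt]

lemma skewOfVec_transpose (k : ℕ) (b : Fin (k * (k - 1) / 2) → ℝ) :
    (skewOfVec k b)ᵀ = -skewOfVec k b := by
  ext i j
  simp only [transpose_apply, Matrix.neg_apply, skewOfVec, of_apply]
  split_ifs <;> first | omega | simp

lemma skewOfVec_add (k : ℕ) (b c : Fin (k * (k - 1) / 2) → ℝ) :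
    skewOfVec k (b + c) = skewOfVec k b + skewOfVec k c := by
  ext i j
  simp only [skewOfVec, of_apply, Matrix.add_apply, Pi.add_apply]
  split_ifs <;> ring

lemma skewOfVec_smul (k : ℕ) (r : ℝ) (b : Fin (k * (k - 1) / 2) → ℝ) :
    skewOfVec k (r • b) = r • skewOfVec k b := by
  ext i j
  simp only [skewOfVec, of_apply, Matrix.smul_apply, Pi.smul_apply, smul_eq_mul]
  split_ifs <;> ring

section BlockX

variable {p k : ℕ} (h : k ≤ p)

def finSplit : Fin p ≃ Fin k ⊕ Fin (p - k) :=
  (finCongr (by omega)).trans finSumFinEquiv.symm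

lemma theta1_transpose_eq_submatrix :
    (Theta1 p k)ᵀ = (fromRows (1 : Matrix (Fin k) (Fin k) ℝ) 0).submatrix (finSplit h) id := by
  ext i a
  obtain ⟨s | s, rfl⟩ := (finSplit h).symm.surjective i <;>
    simp [finSplit, Theta1, Ipk, one_apply, Fin.ext_iff]
  omega

lemma theta2_transpose_eq_submatrix :
    (Theta2 p k)ᵀ = (fromRows 0 (1 : Matrix (Fin (p - k)) (Fin (p - k)) ℝ)).submatrix
      (finSplit h) id := by
  ext i a
  obtain ⟨s | s, rfl⟩ := (finSplit h).symm.surjective i <;>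
    simp [finSplit, Theta2, one_apply, Fin.ext_iff, eq_comm]
  omega

lemma blockX_eq_theta (B : Matrix (Fin k) (Fin k) ℝ) (A : Matrix (Fin (p - k)) (Fin k) ℝ) :
    blockX h B A = (Theta1 p k)ᵀ * B * Theta1 p k +
      ((Theta2 p k)ᵀ * A * Theta1 p k - ((Theta2 p k)ᵀ * A * Theta1 p k)ᵀ) := by
  set E₁ : Matrix (Fin k ⊕ Fin (p - k)) (Fin k) ℝ := fromRows 1 0
  set E₂ : Matrix (Fin k ⊕ Fin (p - k)) (Fin (p - k)) ℝ := fromRows 0 1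
  have hblocks : fromBlocks B (-Aᵀ) A 0 = E₁ * B * E₁ᵀ + (E₂ * A * E₁ᵀ - (E₂ * A * E₁ᵀ)ᵀ) := by
    ext (i | i) (j | j) <;> simp [E₁, E₂, mul_apply, one_apply]
  rw [← transpose_transpose (Theta1 p k), theta1_transpose_eq_submatrix h,
    theta2_transpose_eq_submatrix h, blockX, hblocks]
  rfl

end BlockX

section Xphi

variable {p k : ℕ} (h : k ≤ p)

lemma Xphi_add (φ ψ : Fin (k * (k - 1) / 2) ⊕ (Fin k × Fin (p - k)) → ℝ) :
    Xphi p k h (φ + ψ) = Xphi p k h φ + Xphi p k h ψ := by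
  have hb : (φ + ψ) ∘ Sum.inl = φ ∘ Sum.inl + ψ ∘ Sum.inl := rfl
  have hA : (of fun i j => (φ + ψ) (.inr (j, i)) : Matrix (Fin (p - k)) (Fin k) ℝ) =
      of (fun i j => φ (.inr (j, i))) + of fun i j => ψ (.inr (j, i)) := rfl
  rw [Xphi, Xphi, Xphi, hb, skewOfVec_add, hA, blockX_eq_theta, blockX_eq_theta, blockX_eq_theta]
  simp only [Matrix.mul_add, Matrix.add_mul, transpose_add]
  abel

lemma Xphi_smul (r : ℝ) (φ : Fin (k * (k - 1) / 2) ⊕ (Fin k × Fin (p - k)) → ℝ) :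
    Xphi p k h (r • φ) = r • Xphi p k h φ := by
  have hb : (r • φ) ∘ Sum.inl = r • (φ ∘ Sum.inl) := rfl
  have hA : (of fun i j => (r • φ) (.inr (j, i)) : Matrix (Fin (p - k)) (Fin k) ℝ) =
      r • of fun i j => φ (.inr (j, i)) := rfl
  rw [Xphi, Xphi, hb, skewOfVec_smul, hA, blockX_eq_theta, blockX_eq_theta]
  simp only [Matrix.mul_smul, Matrix.smul_mul, transpose_smul, smul_sub, smul_add]

lemma Xphi_transpose (φ : Fin (k * (k - 1) / 2) ⊕ (Fin k × Fin (p - k)) → ℝ) :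
    (Xphi p k h φ)ᵀ = -Xphi p k h φ := by
  rw [Xphi, blockX_eq_theta]
  simp only [transpose_add, transpose_sub, transpose_transpose, transpose_mul,
    skewOfVec_transpose, Matrix.mul_neg, Matrix.neg_mul, Matrix.mul_assoc]
  abel

end Xphi

lemma isUnit_one_sub_of_transpose_eq_neg {R n : Type*} [Field R] [LinearOrder R]
    [IsStrictOrderedRing R] [Fintype n] [DecidableEq n] {X : Matrix n n R} (hX : Xᵀ = -X) :
    IsUnit (1 - X) := by
  refine (isUnit_iff_isUnit_det _).2 (isUnit_iff_ne_zero.2 fun hdet => ?_)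
  obtain ⟨v, hv, hXv⟩ := exists_mulVec_eq_zero_iff.2 hdet
  have hskew : v ⬝ᵥ (X *ᵥ v) = 0 := by
    have h : v ⬝ᵥ (X *ᵥ v) = (Xᵀ *ᵥ v) ⬝ᵥ v := by rw [mulVec_transpose, dotProduct_mulVec]
    rw [hX, neg_mulVec, neg_dotProduct, dotProduct_comm (X *ᵥ v)] at h
    linarith
  have : v ⬝ᵥ v = 0 := by
    simpa [sub_mulVec, dotProduct_sub, hskew] using congrArg (v ⬝ᵥ ·) hXv
  exact hv (dotProduct_self_eq_zero.1 this)

lemma vecP_eq_vec {a b : ℕ} (M : Matrix (Fin a) (Fin b) ℝ) : vecP M = M.vec := rfl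

lemma gammaV_mulVec {p k : ℕ} (h : k ≤ p) {K : Matrix (Fin p × Fin p) (Fin p × Fin p) ℝ}
    (hK : ∀ M : Matrix (Fin p) (Fin p) ℝ, K *ᵥ vecP M = vecP Mᵀ)
    {Dt : Matrix (Fin k × Fin k) (Fin (k * (k - 1) / 2)) ℝ}
    (hDt : ∀ B : Matrix (Fin k) (Fin k) ℝ, Bᵀ = -B → Dt *ᵥ subdiagVec B = vecP B)
    (ψ : Fin (k * (k - 1) / 2) ⊕ (Fin k × Fin (p - k)) → ℝ) :
    GammaV p k K Dt *ᵥ ψ = vecP (Xphi p k h ψ) := by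
  simp only [vecP_eq_vec] at hK hDt ⊢
  set B := skewOfVec k (ψ ∘ Sum.inl)
  set A : Matrix (Fin (p - k)) (Fin k) ℝ := of fun i j => ψ (.inr (j, i))
  have hB : Dt *ᵥ (ψ ∘ Sum.inl) = B.vec := by
    rw [← hDt B (skewOfVec_transpose k _), subdiagVec_skewOfVec]
  have hA : ψ ∘ Sum.inr = A.vec := rfl
  rw [Xphi, blockX_eq_theta, vec_add, vec_sub, GammaV]
  conv_lhs => rw [← Sum.elim_comp_inl_inr ψ]
  rw [fromCols_mulVec_sumElim, ← mulVec_mulVec, ← mulVec_mulVec, hB, hA, kronecker_mulVec_vec,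
    kronecker_mulVec_vec, sub_mulVec, one_mulVec, hK, transpose_transpose]

section CayleyMap

variable {𝕜 R : Type*}

def cayleyMap [Ring R] (x : R) : R := (1 + x) * Ring.inverse (1 - x)

variable [NontriviallyNormedField 𝕜] [NormedRing R] [NormedAlgebra 𝕜 R] [HasSummableGeomSeries R]

theorem contDiffAt_cayleyMap {x : R} (hx : IsUnit (1 - x)) {n : WithTop ℕ∞} :
    ContDiffAt 𝕜 n cayleyMap x := by
  obtain ⟨u, hu⟩ := hx
  have hinv : ContDiffAt 𝕜 n (fun y : R => Ring.inverse (1 - y)) x :=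
    (hu ▸ contDiffAt_ringInverse 𝕜 u).comp x (contDiffAt_const.sub contDiffAt_id)
  exact (contDiffAt_const.add contDiffAt_id).mul hinv

open ContinuousLinearMap in
theorem hasFDerivAt_cayleyMap {x : R} (hx : IsUnit (1 - x)) :
    HasFDerivAt cayleyMap
      ((2 : 𝕜) • mulLeftRight 𝕜 R (Ring.inverse (1 - x)) (Ring.inverse (1 - x))) x := by
  obtain ⟨u, hu⟩ := hx
  have hW : Ring.inverse (1 - x) = ↑u⁻¹ := by rw [← hu, Ring.inverse_unit]
  have hinv : HasFDerivAt (fun y : R => Ring.inverse (1 - y)) (mulLeftRight 𝕜 R ↑u⁻¹ ↑u⁻¹) x := by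
    have h := hasFDerivAt_ringInverse (𝕜 := 𝕜) u
    rw [hu] at h
    exact (h.comp x ((hasFDerivAt_id x).const_sub 1)).congr_fderiv (by ext; simp)
  rw [hW]
  refine (((hasFDerivAt_id x).const_add 1).mul' hinv).congr_fderiv ?_
  ext h
  have hplus : 1 + x = 2 - (u : R) := by rw [hu, ← one_add_one_eq_two]; abel
  simp [hplus, hW, sub_mul, mul_assoc, two_smul, two_mul]

end CayleyMap

section Derivative

-- Matrices carry no global norm; any norm serves to run the chain rule through them.
attribute [local instance] Matrix.linftyOpNormedAddCommGroup Matrix.linftyOpNormedSpace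
  Matrix.linftyOpNormedRing Matrix.linftyOpNormedAlgebra

variable {p k : ℕ} (h : k ≤ p)

def XphiLinearMap :
    (Fin (k * (k - 1) / 2) ⊕ (Fin k × Fin (p - k)) → ℝ) →ₗ[ℝ] Matrix (Fin p) (Fin p) ℝ where
  toFun := Xphi p k h
  map_add' := Xphi_add h
  map_smul' := Xphi_smul h

variable (p k) in
def vecMulIpk : Matrix (Fin p) (Fin p) ℝ →ₗ[ℝ] (Fin k × Fin p → ℝ) where
  toFun M := vecP (M * Ipk p k)
  map_add' M N := by simp only [Matrix.add_mul, vecP_eq_vec, vec_add]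
  map_smul' r M := by simp only [Matrix.smul_mul, vecP_eq_vec, vec_smul, RingHom.id_apply]

lemma vec_cayley_Xphi_eq_comp :
    (fun φ => vecP (cayley p k (Xphi p k h φ))) =
      vecMulIpk p k ∘ cayleyMap ∘ XphiLinearMap h := by
  funext φ
  simp only [cayley, nonsing_inv_eq_ringInverse]
  rfl

lemma contDiff_vec_cayley_Xphi {n : WithTop ℕ∞} :
    ContDiff ℝ n (fun φ => vecP (cayley p k (Xphi p k h φ))) := by
  rw [vec_cayley_Xphi_eq_comp, contDiff_iff_contDiffAt]
  intro φ
  exact (vecMulIpk p k).toContinuousLinearMap.contDiff.contDiffAt.comp φ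
    ((contDiffAt_cayleyMap (isUnit_one_sub_of_transpose_eq_neg (Xphi_transpose h φ))).comp φ
      (XphiLinearMap h).toContinuousLinearMap.contDiff.contDiffAt)

lemma hasFDerivAt_vec_cayley_Xphi {K : Matrix (Fin p × Fin p) (Fin p × Fin p) ℝ}
    (hK : ∀ M : Matrix (Fin p) (Fin p) ℝ, K *ᵥ vecP M = vecP Mᵀ)
    {Dt : Matrix (Fin k × Fin k) (Fin (k * (k - 1) / 2)) ℝ}
    (hDt : ∀ B : Matrix (Fin k) (Fin k) ℝ, Bᵀ = -B → Dt *ᵥ subdiagVec B = vecP B)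
    (φ : Fin (k * (k - 1) / 2) ⊕ (Fin k × Fin (p - k)) → ℝ) :
    HasFDerivAt (fun ψ => vecP (cayley p k (Xphi p k h ψ)))
      (Matrix.toLin' ((2 : ℝ) • ((((Ipk p k)ᵀ * ((1 - Xphi p k h φ)ᵀ)⁻¹) ⊗ₖ
          (1 - Xphi p k h φ)⁻¹) * GammaV p k K Dt))).toContinuousLinearMap φ := by
  rw [vec_cayley_Xphi_eq_comp]
  have hC := hasFDerivAt_cayleyMap (𝕜 := ℝ)
    (isUnit_one_sub_of_transpose_eq_neg (Xphi_transpose h φ))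
  refine ((vecMulIpk p k).toContinuousLinearMap.hasFDerivAt.comp φ
    (hC.comp φ (XphiLinearMap h).toContinuousLinearMap.hasFDerivAt)).congr_fderiv ?_
  ext1 ψ
  have hW : Ring.inverse (1 - Xphi p k h φ) = (1 - Xphi p k h φ)⁻¹ :=
    (nonsing_inv_eq_ringInverse _).symm
  rw [hW]
  change
    (((2 : ℝ) • ((1 - Xphi p k h φ)⁻¹ * Xphi p k h ψ * (1 - Xphi p k h φ)⁻¹)) * Ipk p k).vec = _
  rw [LinearMap.coe_toContinuousLinearMap', toLin'_apply, smul_mulVec, ← mulVec_mulVec,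
    gammaV_mulVec h hK hDt, vecP_eq_vec, kronecker_mulVec_vec, transpose_mul, transpose_transpose,
    transpose_nonsing_inv, transpose_transpose, smul_mul, vec_smul, Matrix.mul_assoc _ _ (Ipk p k)]

end Derivative

theorem cayley_deriv_matrix_general (p k : ℕ) (hkp : k < p)
    (K : Matrix (Fin p × Fin p) (Fin p × Fin p) ℝ)
    (hK : ∀ M : Matrix (Fin p) (Fin p) ℝ, K *ᵥ vecP M = vecP Mᵀ)
    (Dt : Matrix (Fin k × Fin k) (Fin (k * (k - 1) / 2)) ℝ)
    (hDt : ∀ B : Matrix (Fin k) (Fin k) ℝ, Bᵀ = -B →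
      Dt *ᵥ subdiagVec B = vecP B) :
    ContDiff ℝ 1 (fun φ : (Fin (k * (k - 1) / 2) ⊕ (Fin k × Fin (p - k))) → ℝ =>
      vecP (cayley p k (Xphi p k hkp.le φ))) ∧
    ∀ φ : (Fin (k * (k - 1) / 2) ⊕ (Fin k × Fin (p - k))) → ℝ,
      LinearMap.toMatrix' (fderiv ℝ
          (fun ψ : (Fin (k * (k - 1) / 2) ⊕ (Fin k × Fin (p - k))) → ℝ =>
            vecP (cayley p k (Xphi p k hkp.le ψ))) φ).toLinearMap
        = (2 : ℝ) • ((((Ipk p k)ᵀ * ((1 - Xphi p k hkp.le φ)ᵀ)⁻¹) ⊗ₖ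
            (1 - Xphi p k hkp.le φ)⁻¹) * GammaV p k K Dt) := by
  refine ⟨contDiff_vec_cayley_Xphi hkp.le, fun φ => ?_⟩
  rw [(hasFDerivAt_vec_cayley_Xphi hkp.le hK hDt φ).fderiv, LinearMap.coe_toContinuousLinearMap,
    LinearMap.toMatrix'_toLin']

/-- The vectorized Cayley transform `φ ↦ vec (C(X_φ))` is continuously
differentiable with derivative matrix
`DC(φ) = 2 [I_{p×k}ᵀ (I - X_φ)⁻ᵀ ⊗ (I - X_φ)⁻¹] Γ_V`. -/
theorem cayley_deriv_matrix (p k : ℕ) (hk : 0 < k) (hkp : k < p)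
    (K : Matrix (Fin p × Fin p) (Fin p × Fin p) ℝ)
    (hK : ∀ M : Matrix (Fin p) (Fin p) ℝ, K *ᵥ vecP M = vecP Mᵀ)
    (Dt : Matrix (Fin k × Fin k) (Fin (k * (k - 1) / 2)) ℝ)
    (hDt : ∀ B : Matrix (Fin k) (Fin k) ℝ, Bᵀ = -B →
      Dt *ᵥ subdiagVec B = vecP B) :
    ContDiff ℝ 1 (fun φ : (Fin (k * (k - 1) / 2) ⊕ (Fin k × Fin (p - k))) → ℝ =>
      vecP (cayley p k (Xphi p k hkp.le φ))) ∧
    ∀ φ : (Fin (k * (k - 1) / 2) ⊕ (Fin k × Fin (p - k))) → ℝ,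
      LinearMap.toMatrix' (fderiv ℝ
          (fun ψ : (Fin (k * (k - 1) / 2) ⊕ (Fin k × Fin (p - k))) → ℝ =>
            vecP (cayley p k (Xphi p k hkp.le ψ))) φ).toLinearMap
        = (2 : ℝ) • ((((Ipk p k)ᵀ * ((1 - Xphi p k hkp.le φ)ᵀ)⁻¹) ⊗ₖ
            (1 - Xphi p k hkp.le φ)⁻¹) * GammaV p k K Dt) :=
  cayley_deriv_matrix_general p k hkp K hK Dt hDt

end
end

section
/- Let k ≤ p be positive integers. Suppose Q and Q' are p×k real matrices with QᵀQ = Q'ᵀQ' = I_k, whose top k×k blocks Q₁ and Q₁' are both symmetric positive definite, and whose column spaces are equal (i.e., the ranges of the linear maps x ↦ Qx and x ↦ Q'x from ℝ^k to ℝ^p coincide). Then Q = Q'. -/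
open Matrix MeasureTheory Filter
open scoped Kronecker ENNReal

noncomputable section

/-!
Since `Q'` has orthonormal columns lying in the column space of `Q`, we have `Q' = Q U` with
`U = Qᵀ Q'` orthogonal, so the top blocks satisfy `Q₁' = Q₁ U`. Then `Q₁'² = Q₁' Q₁'ᵀ = Q₁ Q₁ᵀ = Q₁²`,
and uniqueness of positive semidefinite square roots gives `Q₁' = Q₁`; as `Q₁` is invertible,
`U = 1`.
-/

theorem Matrix.mul_transpose_mul_of_range_le {m n R : Type*} [Fintype m] [Fintype n]
    [DecidableEq n] [CommSemiring R] {Q Q' : Matrix m n R} (hQ : Qᵀ * Q = 1)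
    (hle : LinearMap.range Q'.mulVecLin ≤ LinearMap.range Q.mulVecLin) :
    Q * (Qᵀ * Q') = Q' := by
  refine ext_of_mulVec_single fun j => ?_
  obtain ⟨c, hc⟩ := hle ⟨Pi.single j 1, rfl⟩
  simp only [mulVecLin_apply] at hc
  calc (Q * (Qᵀ * Q')) *ᵥ Pi.single j 1 = (Q * Qᵀ * Q) *ᵥ c := by
        rw [← mulVec_mulVec, ← mulVec_mulVec, ← hc, mulVec_mulVec, mulVec_mulVec]
    _ = Q' *ᵥ Pi.single j 1 := by rw [Matrix.mul_assoc, hQ, Matrix.mul_one, hc]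

open scoped MatrixOrder ComplexOrder in
theorem Matrix.PosDef.eq_one_of_posDef_mul {n 𝕜 : Type*} [Fintype n] [DecidableEq n]
    [RCLike 𝕜] {A U : Matrix n n 𝕜} (hA : A.PosDef) (hAU : (A * U).PosDef)
    (hU : U * Uᴴ = 1) : U = 1 := by
  have hsq : A ^ 2 = (A * U) ^ 2 := by
    calc A ^ 2 = A * Aᴴ := by rw [sq, hA.isHermitian.eq]
      _ = A * U * (A * U)ᴴ := by
        rw [conjTranspose_mul, Matrix.mul_assoc, ← Matrix.mul_assoc U, hU, Matrix.one_mul]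
      _ = (A * U) ^ 2 := by rw [sq, hAU.isHermitian.eq]
  have hAU_eq : A * U = A :=
    ((CFC.sq_eq_sq_iff A (A * U) hA.posSemidef.nonneg hAU.posSemidef.nonneg).mp hsq).symm
  exact hA.isUnit.mul_eq_left.mp hAU_eq

theorem topBlock_mul {p k : ℕ} (h : k ≤ p) (Q : Matrix (Fin p) (Fin k) ℝ)
    (U : Matrix (Fin k) (Fin k) ℝ) : topBlock h (Q * U) = topBlock h Q * U :=
  rfl

theorem columnSpace_injOn_Vplus_general (p k : ℕ) (hkp : k ≤ p)
    (Q Q' : Matrix (Fin p) (Fin k) ℝ)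
    (hQ : Qᵀ * Q = 1) (hQ' : Q'ᵀ * Q' = 1)
    (hpd : (topBlock hkp Q).PosDef) (hpd' : (topBlock hkp Q').PosDef)
    (hrange : LinearMap.range Q.mulVecLin = LinearMap.range Q'.mulVecLin) :
    Q = Q' := by
  set U := Qᵀ * Q'
  have hQU : Q * U = Q' := mul_transpose_mul_of_range_le hQ hrange.ge
  have hU : Uᵀ * U = 1 := by
    rw [transpose_mul, transpose_transpose, Matrix.mul_assoc, hQU, hQ']
  have hU_eq : U = 1 := by
    refine hpd.eq_one_of_posDef_mul ?_ ?_
    · rwa [← topBlock_mul, hQU]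
    · rw [conjTranspose_eq_transpose_of_trivial]
      exact mul_eq_one_comm.mp hU
  rw [← hQU, hU_eq, Matrix.mul_one]

/-- The column-space map is injective on `V⁺(k,p)`: two orthogonal `p × k`
matrices whose top `k × k` blocks are symmetric positive definite and whose
column spaces coincide must be equal. -/
theorem columnSpace_injOn_Vplus (p k : ℕ) (hk : 0 < k) (hkp : k ≤ p)
    (Q Q' : Matrix (Fin p) (Fin k) ℝ)
    (hQ : Qᵀ * Q = 1) (hQ' : Q'ᵀ * Q' = 1)
    (hpd : (topBlock hkp Q).PosDef) (hpd' : (topBlock hkp Q').PosDef)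
    (hrange : LinearMap.range Q.mulVecLin = LinearMap.range Q'.mulVecLin) :
    Q = Q' :=
  columnSpace_injOn_Vplus_general p k hkp Q Q' hQ hQ' hpd hpd' hrange

end
end

section
/- Let k < p be positive integers and let Q = [Q₁ᵀ Q₂ᵀ]ᵀ be a p×k real matrix with QᵀQ = I_k whose top k×k block Q₁ is symmetric positive definite. Then I_k + Q₁ is invertible, and defining F = (I_k − Q₁)(I_k + Q₁)⁻¹ and A = ½ Q₂ (I_k + F), the matrix I_k − AᵀA is symmetric positive definite (equivalently, every eigenvalue of AᵀA lies in [0,1)). -/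
open Matrix MeasureTheory Filter
open scoped Kronecker ENNReal

noncomputable section

/-!
With `S = I + Q₁`, one has `I + F = 2 S⁻¹`, so `A = Q₂ S⁻¹`, and `Q₂ᵀQ₂ = I - Q₁²`
by orthonormality of the columns of `Q`. Hence
`I - AᵀA = S⁻ᵀ (SᵀS - Q₂ᵀQ₂) S⁻¹ = S⁻ᵀ · 2(Q₁ + Q₁²) · S⁻¹`,
a congruence of the positive definite matrix `2(Q₁ + Q₁ᵀQ₁)`.
-/

lemma topBlock_transpose_mul_add_botBlock_transpose_mul {p k : ℕ} (h : k ≤ p)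
    (Q : Matrix (Fin p) (Fin k) ℝ) :
    (topBlock h Q)ᵀ * topBlock h Q + (botBlock h Q)ᵀ * botBlock h Q = Qᵀ * Q := by
  ext i j
  have hp : k + (p - k) = p := by omega
  simp only [Matrix.add_apply, Matrix.mul_apply, transpose_apply, topBlock, botBlock]
  rw [← Fintype.sum_equiv (finCongr hp) (fun l => Q (Fin.cast hp l) i * Q (Fin.cast hp l) j) _
    (fun _ => rfl), Fin.sum_univ_add]
  rfl

section

variable {m n R : Type*} [Fintype m] [Fintype n] [DecidableEq n] [CommRing R]

lemma one_add_sub_mul_inv_one_add {X : Matrix n n R} (hX : IsUnit (1 + X)) :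
    1 + (1 - X) * (1 + X)⁻¹ = (2 : R) • (1 + X)⁻¹ := by
  have hSS : (1 + X) * (1 + X)⁻¹ = 1 := mul_nonsing_inv _ ((isUnit_iff_isUnit_det _).mp hX)
  calc 1 + (1 - X) * (1 + X)⁻¹ = ((1 + X) + (1 - X)) * (1 + X)⁻¹ := by rw [add_mul, hSS]
    _ = (2 : R) • (1 + X)⁻¹ := by
      rw [show (1 + X) + (1 - X) = (2 : R) • (1 : Matrix n n R) by rw [two_smul]; abel,
        smul_mul_assoc, one_mul]

lemma one_sub_transpose_mul_self_mul_inv (Y : Matrix m n R) {S : Matrix n n R}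
    (hS : IsUnit S) :
    1 - (Y * S⁻¹)ᵀ * (Y * S⁻¹) = (S⁻¹)ᵀ * (Sᵀ * S - Yᵀ * Y) * S⁻¹ := by
  have hdet : IsUnit S.det := (isUnit_iff_isUnit_det _).mp hS
  have hSS : S * S⁻¹ = 1 := mul_nonsing_inv _ hdet
  have hSSt : (S⁻¹)ᵀ * Sᵀ = 1 := by rw [← transpose_mul, hSS, transpose_one]
  rw [transpose_mul, Matrix.mul_sub, Matrix.sub_mul, ← Matrix.mul_assoc (S⁻¹)ᵀ, hSSt, one_mul,
    hSS]
  simp only [Matrix.mul_assoc]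

end

theorem one_sub_AtA_posDef_general (p k : ℕ) (hkp : k < p)
    (Q : Matrix (Fin p) (Fin k) ℝ) (hQ : Qᵀ * Q = 1)
    (hpd : (topBlock hkp.le Q).PosDef) :
    IsUnit (1 + topBlock hkp.le Q) ∧
    (1 - ((1 / 2 : ℝ) • (botBlock hkp.le Q *
          (1 + (1 - topBlock hkp.le Q) * (1 + topBlock hkp.le Q)⁻¹)))ᵀ *
        ((1 / 2 : ℝ) • (botBlock hkp.le Q *
          (1 + (1 - topBlock hkp.le Q) * (1 + topBlock hkp.le Q)⁻¹)))).PosDef := by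
  set X := topBlock hkp.le Q
  set Y := botBlock hkp.le Q
  have hXt : Xᵀ = X := by simpa [conjTranspose_eq_transpose_of_trivial] using hpd.isHermitian.eq
  have hS : IsUnit (1 + X) := (PosDef.one.add hpd).isUnit
  refine ⟨hS, ?_⟩
  have hA : (1 / 2 : ℝ) • (Y * (1 + (1 - X) * (1 + X)⁻¹)) = Y * (1 + X)⁻¹ := by
    rw [one_add_sub_mul_inv_one_add hS, Matrix.mul_smul, smul_smul]
    norm_num
  have hYY : Yᵀ * Y = 1 - X * X := by
    rw [← hQ, ← topBlock_transpose_mul_add_botBlock_transpose_mul hkp.le Q, hXt]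
    abel
  have hgap : (1 + X)ᵀ * (1 + X) - Yᵀ * Y = (2 : ℝ) • (X + Xᴴ * X) := by
    rw [hYY, transpose_add, transpose_one, hXt, conjTranspose_eq_transpose_of_trivial, hXt,
      two_smul]
    noncomm_ring
  have hcore : ((2 : ℝ) • (X + Xᴴ * X)).PosDef :=
    (hpd.add_posSemidef (posSemidef_conjTranspose_mul_self X)).smul two_pos
  rw [hA, one_sub_transpose_mul_self_mul_inv Y hS, hgap, ← conjTranspose_eq_transpose_of_trivial]
  exact (IsUnit.posDef_star_left_conjugate_iff (isUnit_nonsing_inv_iff.mpr hS)).mpr hcore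

/-- If `Q ∈ V⁺(k,p)` (orthogonal with symmetric positive definite top block
`Q₁`), then `I + Q₁` is invertible and, with `F = (I - Q₁)(I + Q₁)⁻¹` and
`A = ½ Q₂ (I + F)`, the matrix `I - AᵀA` is symmetric positive definite. -/
theorem one_sub_AtA_posDef (p k : ℕ) (hk : 0 < k) (hkp : k < p)
    (Q : Matrix (Fin p) (Fin k) ℝ) (hQ : Qᵀ * Q = 1)
    (hpd : (topBlock hkp.le Q).PosDef) :
    IsUnit (1 + topBlock hkp.le Q) ∧
    (1 - ((1 / 2 : ℝ) • (botBlock hkp.le Q *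
          (1 + (1 - topBlock hkp.le Q) * (1 + topBlock hkp.le Q)⁻¹)))ᵀ *
        ((1 / 2 : ℝ) • (botBlock hkp.le Q *
          (1 + (1 - topBlock hkp.le Q) * (1 + topBlock hkp.le Q)⁻¹)))).PosDef :=
  one_sub_AtA_posDef_general p k hkp Q hQ hpd

end
end

section
/- Let k < p be positive integers and let Q = [Q₁ᵀ Q₂ᵀ]ᵀ be a p×k real matrix with QᵀQ = I_k whose top k×k block Q₁ is symmetric positive definite. Then, with F = (I_k − Q₁)(I_k + Q₁)⁻¹ and A = ½ Q₂ (I_k + F), one has the identity AᵀA = F = (I_k − Q₁)(I_k + Q₁)⁻¹. -/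
open Matrix MeasureTheory Filter
open scoped Kronecker ENNReal

noncomputable section

/-! Since `Q₁` is symmetric, `QᵀQ = I` reads `Q₂ᵀQ₂ = I - Q₁² = (I - Q₁)(I + Q₁)`. Writing
`I - Q₁ = 2 - (I + Q₁)` gives `I + F = 2 (I + Q₁)⁻¹`, so `A = Q₂ (I + Q₁)⁻¹` and
`AᵀA = (I + Q₁)⁻¹ (I - Q₁) = F`, the last step because `I - Q₁` commutes with `(I + Q₁)⁻¹`. -/

theorem transpose_mul_self_eq_topBlock_add_botBlock {p k : ℕ} (h : k ≤ p)
    (Q : Matrix (Fin p) (Fin k) ℝ) :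
    Qᵀ * Q = (topBlock h Q)ᵀ * topBlock h Q + (botBlock h Q)ᵀ * botBlock h Q := by
  ext i j
  simp only [Matrix.add_apply, mul_apply, transpose_apply, topBlock, botBlock]
  rw [← (finSumFinEquiv.trans (finCongr (by omega : k + (p - k) = p))).sum_comp,
    Fintype.sum_sum_type]
  rfl

namespace Matrix

variable {m n K : Type*} [Fintype n] [DecidableEq n] [Field K] {S : Matrix n n K}

theorem one_sub_mul_inv_one_add (hdet : IsUnit (1 + S).det) :
    (1 - S) * (1 + S)⁻¹ = (2 : K) • (1 + S)⁻¹ - 1 := by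
  rw [show 1 - S = (2 : K) • (1 : Matrix n n K) - (1 + S) by module, sub_mul, smul_mul, one_mul,
    mul_nonsing_inv _ hdet]

theorem inv_one_add_mul_one_sub (hdet : IsUnit (1 + S).det) :
    (1 + S)⁻¹ * (1 - S) = (2 : K) • (1 + S)⁻¹ - 1 := by
  rw [show 1 - S = (2 : K) • (1 : Matrix n n K) - (1 + S) by module, mul_sub, Matrix.mul_smul,
    mul_one, nonsing_inv_mul _ hdet]

theorem half_smul_mul_one_add_one_sub_mul_inv [NeZero (2 : K)] (hdet : IsUnit (1 + S).det)
    (B : Matrix m n K) :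
    (1 / 2 : K) • (B * (1 + (1 - S) * (1 + S)⁻¹)) = B * (1 + S)⁻¹ := by
  rw [one_sub_mul_inv_one_add hdet, add_sub_cancel, Matrix.mul_smul, smul_smul,
    one_div_mul_cancel two_ne_zero, one_smul]

theorem transpose_mul_self_mul_inv_one_add [Fintype m] (hS : S.IsSymm)
    (hdet : IsUnit (1 + S).det) {B : Matrix m n K} (hB : Sᵀ * S + Bᵀ * B = 1) :
    (B * (1 + S)⁻¹)ᵀ * (B * (1 + S)⁻¹) = (1 - S) * (1 + S)⁻¹ := by
  have hBtB : Bᵀ * B = (1 - S) * (1 + S) := by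
    rw [eq_sub_of_add_eq' hB, hS.eq]
    noncomm_ring
  have hinv_symm : ((1 + S)⁻¹)ᵀ = (1 + S)⁻¹ := by
    rw [transpose_nonsing_inv, transpose_add, transpose_one, hS.eq]
  calc (B * (1 + S)⁻¹)ᵀ * (B * (1 + S)⁻¹)
      = (1 + S)⁻¹ * (Bᵀ * B) * (1 + S)⁻¹ := by
        simp only [transpose_mul, hinv_symm, Matrix.mul_assoc]
    _ = (1 + S)⁻¹ * (1 - S) * ((1 + S) * (1 + S)⁻¹) := by
        simp only [hBtB, Matrix.mul_assoc]
    _ = (1 - S) * (1 + S)⁻¹ := by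
        rw [mul_nonsing_inv _ hdet, Matrix.mul_one, inv_one_add_mul_one_sub hdet,
          one_sub_mul_inv_one_add hdet]

end Matrix

theorem AtA_eq_F_general (p k : ℕ) (hkp : k < p)
    (Q : Matrix (Fin p) (Fin k) ℝ) (hQ : Qᵀ * Q = 1)
    (hpd : (topBlock hkp.le Q).PosDef) :
    IsUnit (1 + topBlock hkp.le Q) ∧
    ((1 / 2 : ℝ) • (botBlock hkp.le Q *
        (1 + (1 - topBlock hkp.le Q) * (1 + topBlock hkp.le Q)⁻¹)))ᵀ *
      ((1 / 2 : ℝ) • (botBlock hkp.le Q *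
        (1 + (1 - topBlock hkp.le Q) * (1 + topBlock hkp.le Q)⁻¹)))
      = (1 - topBlock hkp.le Q) * (1 + topBlock hkp.le Q)⁻¹ := by
  have hunit : IsUnit (1 + topBlock hkp.le Q) := (PosDef.posSemidef_add PosSemidef.one hpd).isUnit
  have hdet : IsUnit (1 + topBlock hkp.le Q).det := (isUnit_iff_isUnit_det _).mp hunit
  have hsymm : (topBlock hkp.le Q).IsSymm := isHermitian_iff_isSymm.mp hpd.isHermitian
  refine ⟨hunit, ?_⟩
  rw [half_smul_mul_one_add_one_sub_mul_inv hdet]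
  exact transpose_mul_self_mul_inv_one_add hsymm hdet
    (transpose_mul_self_eq_topBlock_add_botBlock hkp.le Q ▸ hQ)

/-- If `Q ∈ V⁺(k,p)`, then with `F = (I - Q₁)(I + Q₁)⁻¹` and
`A = ½ Q₂ (I + F)` one has `AᵀA = F`. -/
theorem AtA_eq_F (p k : ℕ) (hk : 0 < k) (hkp : k < p)
    (Q : Matrix (Fin p) (Fin k) ℝ) (hQ : Qᵀ * Q = 1)
    (hpd : (topBlock hkp.le Q).PosDef) :
    IsUnit (1 + topBlock hkp.le Q) ∧
    ((1 / 2 : ℝ) • (botBlock hkp.le Q *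
        (1 + (1 - topBlock hkp.le Q) * (1 + topBlock hkp.le Q)⁻¹)))ᵀ *
      ((1 / 2 : ℝ) • (botBlock hkp.le Q *
        (1 + (1 - topBlock hkp.le Q) * (1 + topBlock hkp.le Q)⁻¹)))
      = (1 - topBlock hkp.le Q) * (1 + topBlock hkp.le Q)⁻¹ :=
  AtA_eq_F_general p k hkp Q hQ hpd

end
end

section
/- Let k < p be positive integers and let A be a (p−k)×k real matrix such that I_k − AᵀA is positive definite (equivalently, every eigenvalue of AᵀA lies in [0,1)). Then I_k + AᵀA is invertible and the matrix Q₁ = (I_k − AᵀA)(I_k + AᵀA)⁻¹ is symmetric positive definite. Moreover, letting X = [[0, −Aᵀ],[A, 0]] and Q = C(X) = (I_p + X)(I_p − X)⁻¹ I_{p×k}, the top k×k block of Q equals Q₁, QᵀQ = I_k, and hence Q ∈ V⁺(k,p). -/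
open Matrix MeasureTheory Filter
open scoped Kronecker ENNReal

noncomputable section

/-!
The matrix `X = [[0, -Aᵀ], [A, 0]]` is skew-symmetric, so `vᵀ X v = 0` and `1 - X` is
invertible; as `1 ± X` commute and are each other's transposes, `(1 + X)(1 - X)⁻¹` is
orthogonal, and so its first `k` columns `C(X)` are orthonormal. The first block column
`(W₁₁; W₂₁)` of `(1 - X)⁻¹` solves `W₁₁ + Aᵀ W₂₁ = 1`, `W₂₁ = A W₁₁`, hence
`W₁₁ = (1 + AᵀA)⁻¹`, and the top block of `(1 + X)(1 - X)⁻¹` is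
`W₁₁ - Aᵀ W₂₁ = (1 - AᵀA)(1 + AᵀA)⁻¹`. This is positive definite as the product of the commuting
positive definite matrices `1 - AᵀA` and `(1 + AᵀA)⁻¹`.
-/

open scoped MatrixOrder ComplexOrder in
theorem Matrix.PosDef.mul_of_commute {𝕜 n : Type*} [RCLike 𝕜] [Fintype n] [DecidableEq n]
    {A B : Matrix n n 𝕜} (hA : A.PosDef) (hB : B.PosDef) (h : Commute A B) :
    (A * B).PosDef :=
  ((hA.isStrictlyPositive.commute_iff hB.isStrictlyPositive).mp h).posDef

open scoped ComplexOrder in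
theorem Matrix.PosDef.one_sub_mul_inv_one_add {𝕜 n : Type*} [RCLike 𝕜] [Fintype n]
    [DecidableEq n] {M : Matrix n n 𝕜} (h₁ : (1 - M).PosDef) (h₂ : (1 + M).PosDef) :
    ((1 - M) * (1 + M)⁻¹).PosDef := by
  obtain ⟨u, hu⟩ := h₂.isUnit
  have hcomm : Commute (1 - M) (1 + M) := by
    simp only [Commute, SemiconjBy]; noncomm_ring
  refine h₁.mul_of_commute h₂.inv ?_
  rw [← hu] at hcomm ⊢
  rw [← Matrix.coe_units_inv]
  exact hcomm.units_inv_right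

section Cayley

variable {R n : Type*} [Field R] [LinearOrder R] [IsStrictOrderedRing R] [Fintype n]
  [DecidableEq n] {X : Matrix n n R}

theorem isUnit_one_sub_of_transpose_eq_neg_s8 (hX : Xᵀ = -X) : IsUnit (1 - X) := by
  refine Matrix.mulVec_injective_iff_isUnit.mp fun v w hvw => ?_
  set d := v - w
  have hXd : X *ᵥ d = d := by
    have hd : (1 - X) *ᵥ d = 0 := by rw [Matrix.mulVec_sub, hvw, sub_self]
    rw [Matrix.sub_mulVec, Matrix.one_mulVec, sub_eq_zero] at hd
    exact hd.symm
  have hskew : d ⬝ᵥ (X *ᵥ d) = -(d ⬝ᵥ (X *ᵥ d)) :=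
    calc d ⬝ᵥ (X *ᵥ d) = (Xᵀ *ᵥ d) ⬝ᵥ d := by
          rw [Matrix.mulVec_transpose, dotProduct_mulVec]
      _ = -(d ⬝ᵥ (X *ᵥ d)) := by rw [hX, Matrix.neg_mulVec, neg_dotProduct, dotProduct_comm]
  rw [hXd] at hskew
  exact sub_eq_zero.mp (dotProduct_self_eq_zero.mp (by linarith))

theorem transpose_mul_self_one_add_mul_inv_one_sub (hX : Xᵀ = -X) :
    ((1 + X) * (1 - X)⁻¹)ᵀ * ((1 + X) * (1 - X)⁻¹) = 1 := by
  have hsub := (Matrix.isUnit_iff_isUnit_det _).mp (isUnit_one_sub_of_transpose_eq_neg_s8 hX)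
  have hadd : IsUnit (1 + X).det := by
    simpa [sub_eq_add_neg] using (Matrix.isUnit_iff_isUnit_det _).mp
      (isUnit_one_sub_of_transpose_eq_neg_s8 (X := -X) (by rw [Matrix.transpose_neg, hX]))
  have hsub_tr : (1 - X)ᵀ = 1 + X := by
    rw [Matrix.transpose_sub, Matrix.transpose_one, hX, sub_neg_eq_add]
  have hadd_tr : (1 + X)ᵀ = 1 - X := by
    rw [Matrix.transpose_add, Matrix.transpose_one, hX, sub_eq_add_neg]
  have hcomm : (1 - X) * (1 + X) = (1 + X) * (1 - X) := by noncomm_ring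
  calc ((1 + X) * (1 - X)⁻¹)ᵀ * ((1 + X) * (1 - X)⁻¹)
      = (1 + X)⁻¹ * ((1 - X) * (1 + X)) * (1 - X)⁻¹ := by
        rw [Matrix.transpose_mul, Matrix.transpose_nonsing_inv, hsub_tr, hadd_tr]
        simp only [Matrix.mul_assoc]
    _ = (1 + X)⁻¹ * (1 + X) * ((1 - X) * (1 - X)⁻¹) := by
        rw [hcomm]; simp only [Matrix.mul_assoc]
    _ = 1 := by rw [Matrix.nonsing_inv_mul _ hadd, Matrix.mul_nonsing_inv _ hsub, one_mul]

end Cayley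

section Blocks

variable {R m n : Type*} [CommRing R]

theorem transpose_fromBlocks_skew {B : Matrix m m R} (hB : Bᵀ = -B) (A : Matrix n m R) :
    (fromBlocks B (-Aᵀ) A 0)ᵀ = -fromBlocks B (-Aᵀ) A 0 := by
  rw [fromBlocks_transpose, Matrix.fromBlocks_neg, hB]
  simp

theorem one_sub_fromBlocks_skew [DecidableEq m] [DecidableEq n] (A : Matrix n m R) :
    1 - fromBlocks 0 (-Aᵀ) A 0 = fromBlocks 1 Aᵀ (-A) 1 := by
  rw [← Matrix.fromBlocks_one, sub_eq_add_neg, Matrix.fromBlocks_neg, Matrix.fromBlocks_add]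
  simp

theorem one_add_fromBlocks_skew [DecidableEq m] [DecidableEq n] (A : Matrix n m R) :
    1 + fromBlocks 0 (-Aᵀ) A 0 = fromBlocks 1 (-Aᵀ) A 1 := by
  rw [← Matrix.fromBlocks_one, Matrix.fromBlocks_add]
  simp

theorem toBlocks₁₁_cayley_fromBlocks_skew [Fintype m] [Fintype n] [DecidableEq m]
    [DecidableEq n] (A : Matrix n m R) (hY : IsUnit (1 - fromBlocks 0 (-Aᵀ) A 0)) :
    ((1 + fromBlocks 0 (-Aᵀ) A 0) * (1 - fromBlocks 0 (-Aᵀ) A 0)⁻¹).toBlocks₁₁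
      = (1 - Aᵀ * A) * (1 + Aᵀ * A)⁻¹ := by
  set W := (1 - fromBlocks 0 (-Aᵀ) A 0)⁻¹
  have hW : (1 - fromBlocks 0 (-Aᵀ) A 0) * W = 1 :=
    Matrix.mul_nonsing_inv _ ((Matrix.isUnit_iff_isUnit_det _).mp hY)
  rw [← fromBlocks_toBlocks W, one_sub_fromBlocks_skew, fromBlocks_multiply,
    ← Matrix.fromBlocks_one] at hW
  obtain ⟨h₁₁, -, h₂₁, -⟩ := Matrix.fromBlocks_inj.mp hW
  have hW₂₁ : W.toBlocks₂₁ = A * W.toBlocks₁₁ := by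
    rw [Matrix.neg_mul, Matrix.one_mul, neg_add_eq_zero] at h₂₁
    exact h₂₁.symm
  have hW₁₁ : W.toBlocks₁₁ = (1 + Aᵀ * A)⁻¹ := by
    refine (Matrix.inv_eq_right_inv ?_).symm
    rw [Matrix.add_mul, Matrix.mul_assoc, ← hW₂₁, h₁₁]
  rw [← fromBlocks_toBlocks W, one_add_fromBlocks_skew, fromBlocks_multiply,
    toBlocks_fromBlocks₁₁, hW₂₁, ← hW₁₁, Matrix.sub_mul, Matrix.one_mul, Matrix.mul_assoc,
    Matrix.neg_mul, sub_eq_add_neg]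

end Blocks

theorem Ipk_eq_submatrix_one {p k : ℕ} (h : k ≤ p) :
    Ipk p k = (1 : Matrix (Fin p) (Fin p) ℝ).submatrix id (Fin.castLE h) := by
  ext i j
  simp [Ipk, Matrix.one_apply, Fin.ext_iff]

theorem Ipk_transpose_mul_self {p k : ℕ} (h : k ≤ p) : (Ipk p k)ᵀ * Ipk p k = 1 := by
  rw [Ipk_eq_submatrix_one h, Matrix.transpose_submatrix, Matrix.transpose_one,
    ← Matrix.submatrix_mul _ _ _ _ _ Function.bijective_id, Matrix.one_mul,
    Matrix.submatrix_one _ (Fin.castLE_injective h)]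

theorem cayley_transpose_mul_self {p k : ℕ} (h : k ≤ p) {X : Matrix (Fin p) (Fin p) ℝ}
    (hX : Xᵀ = -X) : (cayley p k X)ᵀ * cayley p k X = 1 := by
  rw [cayley, Matrix.transpose_mul, Matrix.mul_assoc, ← Matrix.mul_assoc _ ((1 + X) * _),
    transpose_mul_self_one_add_mul_inv_one_sub hX, Matrix.one_mul, Ipk_transpose_mul_self h]

theorem topBlock_mul_Ipk {p k : ℕ} (h : k ≤ p) (Z : Matrix (Fin p) (Fin p) ℝ) :
    topBlock h (Z * Ipk p k) = Z.submatrix (Fin.castLE h) (Fin.castLE h) := by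
  have hmul := Matrix.mul_submatrix_one (Equiv.refl (Fin p)) (Fin.castLE h) Z
  rw [Equiv.coe_refl, ← Ipk_eq_submatrix_one] at hmul
  rw [topBlock, hmul]
  rfl

def finSumFinSubEquiv {p k : ℕ} (h : k ≤ p) : Fin k ⊕ Fin (p - k) ≃ Fin p :=
  finSumFinEquiv.trans (finCongr (Nat.add_sub_cancel' h))

theorem blockX_eq_reindex {p k : ℕ} (h : k ≤ p) (B : Matrix (Fin k) (Fin k) ℝ)
    (A : Matrix (Fin (p - k)) (Fin k) ℝ) :
    blockX h B A =
      reindex (finSumFinSubEquiv h) (finSumFinSubEquiv h) (fromBlocks B (-Aᵀ) A 0) :=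
  rfl

theorem transpose_blockX {p k : ℕ} (h : k ≤ p) {B : Matrix (Fin k) (Fin k) ℝ} (hB : Bᵀ = -B)
    (A : Matrix (Fin (p - k)) (Fin k) ℝ) : (blockX h B A)ᵀ = -blockX h B A := by
  rw [blockX_eq_reindex, transpose_reindex, transpose_fromBlocks_skew hB]
  rfl

theorem topBlock_cayley_reindex {p k : ℕ} (h : k ≤ p)
    (Y : Matrix (Fin k ⊕ Fin (p - k)) (Fin k ⊕ Fin (p - k)) ℝ) :
    topBlock h (cayley p k (reindex (finSumFinSubEquiv h) (finSumFinSubEquiv h) Y))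
      = ((1 + Y) * (1 - Y)⁻¹).toBlocks₁₁ := by
  set e := finSumFinSubEquiv h
  have he : ∀ i : Fin k, e.symm (Fin.castLE h i) = Sum.inl i := fun i => by
    rw [Equiv.symm_apply_eq]
    exact Fin.ext (by simp [e, finSumFinSubEquiv])
  have hreindex :
      (1 + reindex e e Y) * (1 - reindex e e Y)⁻¹ = reindex e e ((1 + Y) * (1 - Y)⁻¹) := by
    have hone : (1 : Matrix (Fin p) (Fin p) ℝ) = reindex e e 1 := (submatrix_one_equiv _).symm
    have hadd : 1 + reindex e e Y = reindex e e (1 + Y) := by rw [hone]; rfl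
    have hsub : 1 - reindex e e Y = reindex e e (1 - Y) := by rw [hone]; rfl
    rw [hadd, hsub, Matrix.inv_reindex, reindex_apply, reindex_apply, reindex_apply,
      submatrix_mul_equiv]
  rw [cayley, hreindex, topBlock_mul_Ipk]
  ext i j
  simp only [Matrix.submatrix_apply, Matrix.reindex_apply, he]
  rfl

theorem cayley_mem_Vplus_general (p k : ℕ) (hkp : k < p)
    (A : Matrix (Fin (p - k)) (Fin k) ℝ) (hA : (1 - Aᵀ * A).PosDef) :
    IsUnit (1 + Aᵀ * A) ∧
    ((1 - Aᵀ * A) * (1 + Aᵀ * A)⁻¹).PosDef ∧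
    topBlock hkp.le (cayley p k (blockX hkp.le 0 A))
      = (1 - Aᵀ * A) * (1 + Aᵀ * A)⁻¹ ∧
    (cayley p k (blockX hkp.le 0 A))ᵀ * cayley p k (blockX hkp.le 0 A) = 1 := by
  have hzero : (0 : Matrix (Fin k) (Fin k) ℝ)ᵀ = -0 := by rw [transpose_zero, neg_zero]
  have hM : (1 + Aᵀ * A).PosDef := by
    simpa using PosDef.one.add_posSemidef (posSemidef_conjTranspose_mul_self A)
  have hY : IsUnit (1 - fromBlocks 0 (-Aᵀ) A 0) :=
    isUnit_one_sub_of_transpose_eq_neg_s8 (transpose_fromBlocks_skew hzero A)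
  refine ⟨hM.isUnit, hA.one_sub_mul_inv_one_add hM, ?_,
    cayley_transpose_mul_self hkp.le (transpose_blockX hkp.le hzero A)⟩
  rw [blockX_eq_reindex, topBlock_cayley_reindex, toBlocks₁₁_cayley_fromBlocks_skew A hY]

/-- If `I - AᵀA` is positive definite, then `I + AᵀA` is invertible,
`Q₁ = (I - AᵀA)(I + AᵀA)⁻¹` is symmetric positive definite, and the Cayley
transform of `X = [[0, -Aᵀ],[A, 0]]` is an orthogonal matrix whose top block
is `Q₁`; hence `C(X) ∈ V⁺(k,p)`. -/
theorem cayley_mem_Vplus (p k : ℕ) (hk : 0 < k) (hkp : k < p)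
    (A : Matrix (Fin (p - k)) (Fin k) ℝ) (hA : (1 - Aᵀ * A).PosDef) :
    IsUnit (1 + Aᵀ * A) ∧
    ((1 - Aᵀ * A) * (1 + Aᵀ * A)⁻¹).PosDef ∧
    topBlock hkp.le (cayley p k (blockX hkp.le 0 A))
      = (1 - Aᵀ * A) * (1 + Aᵀ * A)⁻¹ ∧
    (cayley p k (blockX hkp.le 0 A))ᵀ * cayley p k (blockX hkp.le 0 A) = 1 :=
  cayley_mem_Vplus_general p k hkp A hA

end
end

section
/- Let k < p be positive integers and let A be a (p−k)×k real matrix with I_k − AᵀA positive definite. Let Q = C(X) where X = [[0, −Aᵀ],[A, 0]], and write Q = [Q₁ᵀ Q₂ᵀ]ᵀ with Q₁ the top k×k block. Then I_k + Q₁ is invertible and, setting F = (I_k − Q₁)(I_k + Q₁)⁻¹, one recovers A = ½ Q₂ (I_k + F). Consequently the Cayley transform is injective on the set of block matrices [[0, −Aᵀ],[A, 0]] with I_k − AᵀA positive definite. -/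
open Matrix MeasureTheory Filter
open scoped Kronecker ENNReal

noncomputable section

/-! With `S = (1 + AᵀA)⁻¹`, the first block column of `(1 - X)⁻¹` is `[S; A S]`, hence
`Q₁ = (1 - AᵀA) S` and `Q₂ = 2 A S`. The map `B ↦ (1 - B)(1 + B)⁻¹` is an involution wherever
`1 + B` is invertible, so `F = AᵀA` and `½ Q₂ (1 + F) = A S (1 + AᵀA) = A`. Both inverses exist
because `1 - X` is invertible for every skew-symmetric real `X`, and `1 + AᵀA` is its Schur
complement. -/

section SkewBlock

variable {m n R : Type*}

theorem Matrix.isUnit_det_one_sub_of_transpose_eq_neg [Fintype n] [DecidableEq n] [Field R]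
    [LinearOrder R] [IsStrictOrderedRing R] {X : Matrix n n R} (hX : Xᵀ = -X) :
    IsUnit (1 - X).det := by
  rw [isUnit_iff_ne_zero, ne_eq, ← exists_mulVec_eq_zero_iff]
  rintro ⟨v, hv, hXv⟩
  -- the quadratic form of a skew-symmetric matrix vanishes, while `X v = v`
  have hskew : v ⬝ᵥ X *ᵥ v = 0 := by
    have : v ⬝ᵥ X *ᵥ v = -(v ⬝ᵥ X *ᵥ v) := by
      conv_lhs => rw [dotProduct_mulVec, ← mulVec_transpose, hX, dotProduct_comm, neg_mulVec,
        dotProduct_neg]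
    linarith
  rw [sub_mulVec, one_mulVec, sub_eq_zero] at hXv
  rw [← hXv, dotProduct_self_eq_zero] at hskew
  exact hv hskew

def Matrix.skewBlock [Ring R] (A : Matrix m n R) : Matrix (n ⊕ m) (n ⊕ m) R :=
  fromBlocks 0 (-Aᵀ) A 0

theorem Matrix.transpose_skewBlock [Ring R] (A : Matrix m n R) :
    (skewBlock A)ᵀ = -skewBlock A := by
  simp [skewBlock, fromBlocks_transpose, fromBlocks_neg]

theorem Matrix.one_add_skewBlock [DecidableEq m] [DecidableEq n] [Ring R] (A : Matrix m n R) :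
    1 + skewBlock A = fromBlocks 1 (-Aᵀ) A 1 := by
  simp [skewBlock, ← fromBlocks_one, fromBlocks_add]

theorem Matrix.one_sub_skewBlock [DecidableEq m] [DecidableEq n] [Ring R] (A : Matrix m n R) :
    1 - skewBlock A = fromBlocks 1 Aᵀ (-A) 1 := by
  simp [skewBlock, ← fromBlocks_one, sub_eq_add_neg, fromBlocks_neg, fromBlocks_add]

variable [Fintype m] [Fintype n] [DecidableEq m] [DecidableEq n]
  [Field R] [LinearOrder R] [IsStrictOrderedRing R]

theorem Matrix.isUnit_det_one_sub_skewBlock (A : Matrix m n R) : IsUnit (1 - skewBlock A).det :=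
  isUnit_det_one_sub_of_transpose_eq_neg (transpose_skewBlock A)

theorem Matrix.isUnit_det_one_add_transpose_mul_self (A : Matrix m n R) :
    IsUnit (1 + Aᵀ * A).det := by
  have h := isUnit_det_one_sub_skewBlock A
  rwa [one_sub_skewBlock, det_fromBlocks_one₂₂, Matrix.mul_neg, sub_neg_eq_add] at h

-- Without the ascriptions on `fromRows`, the product elaborates through `CStarMatrix`'s `HMul`.
theorem Matrix.one_add_skewBlock_mul_inv_mul_fromRows (A : Matrix m n R) :
    (1 + skewBlock A) * (1 - skewBlock A)⁻¹ * fromRows (1 : Matrix n n R) (0 : Matrix m n R) =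
      fromRows ((1 - Aᵀ * A) * (1 + Aᵀ * A)⁻¹) ((2 : R) • (A * (1 + Aᵀ * A)⁻¹)) := by
  set S := (1 + Aᵀ * A)⁻¹
  have hS : (1 + Aᵀ * A) * S = 1 := mul_nonsing_inv _ (isUnit_det_one_add_transpose_mul_self A)
  have hcol : (1 - skewBlock A) * fromRows S (A * S) = fromRows 1 0 := by
    rw [one_sub_skewBlock, fromBlocks_mul_fromRows, Matrix.one_mul, Matrix.one_mul,
      ← Matrix.mul_assoc, ← one_add_mul, hS, Matrix.neg_mul, neg_add_cancel]
  rw [← hcol, Matrix.mul_assoc, nonsing_inv_mul_cancel_left _ _ (isUnit_det_one_sub_skewBlock A),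
    one_add_skewBlock, fromBlocks_mul_fromRows, Matrix.sub_mul, Matrix.neg_mul, ← Matrix.mul_assoc,
    two_smul, ← sub_eq_add_neg]
  simp only [Matrix.one_mul]

end SkewBlock

section Involution

variable {n R : Type*} [Fintype n] [DecidableEq n] {B : Matrix n n R}

section CommRing

variable [CommRing R]

theorem Matrix.one_add_one_sub_mul_inv (hB : IsUnit (1 + B).det) :
    1 + (1 - B) * (1 + B)⁻¹ = (2 : R) • (1 + B)⁻¹ := by
  nth_rewrite 1 [← mul_nonsing_inv _ hB]
  rw [← Matrix.add_mul, add_add_sub_cancel, ← two_smul R, Matrix.smul_mul, Matrix.one_mul]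

theorem Matrix.one_sub_one_sub_mul_inv (hB : IsUnit (1 + B).det) :
    1 - (1 - B) * (1 + B)⁻¹ = (2 : R) • (B * (1 + B)⁻¹) := by
  nth_rewrite 1 [← mul_nonsing_inv _ hB]
  rw [← Matrix.sub_mul, add_sub_sub_cancel, ← two_smul R, Matrix.smul_mul]

end CommRing

variable [Field R] [NeZero (2 : R)]

theorem Matrix.one_add_one_sub_mul_inv_mul (hB : IsUnit (1 + B).det) :
    (1 + (1 - B) * (1 + B)⁻¹) * ((2 : R)⁻¹ • (1 + B)) = 1 := by
  rw [one_add_one_sub_mul_inv hB, smul_mul_smul, mul_inv_cancel₀ two_ne_zero, one_smul,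
    nonsing_inv_mul _ hB]

theorem Matrix.isUnit_one_add_one_sub_mul_inv (hB : IsUnit (1 + B).det) :
    IsUnit (1 + (1 - B) * (1 + B)⁻¹) :=
  (isUnit_iff_isUnit_det _).mpr (isUnit_det_of_right_inverse (one_add_one_sub_mul_inv_mul hB))

theorem Matrix.one_sub_mul_inv_one_sub_mul_inv (hB : IsUnit (1 + B).det) :
    (1 - (1 - B) * (1 + B)⁻¹) * (1 + (1 - B) * (1 + B)⁻¹)⁻¹ = B := by
  rw [inv_eq_right_inv (one_add_one_sub_mul_inv_mul hB), one_sub_one_sub_mul_inv hB, smul_mul_smul,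
    mul_inv_cancel₀ two_ne_zero, one_smul, Matrix.mul_assoc, nonsing_inv_mul _ hB, Matrix.mul_one]

end Involution

section Reindex

variable {p k : ℕ} (h : k ≤ p)

def finSplitEquiv : Fin p ≃ Fin k ⊕ Fin (p - k) :=
  (finCongr (Nat.add_sub_cancel' h).symm).trans finSumFinEquiv.symm

theorem finSplitEquiv_castLE (j : Fin k) : finSplitEquiv h (Fin.castLE h j) = Sum.inl j := by
  rw [finSplitEquiv, Equiv.trans_apply, Equiv.symm_apply_eq]
  exact Fin.ext rfl

theorem finSplitEquiv_symm_inl (j : Fin k) :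
    (finSplitEquiv h).symm (Sum.inl j) = Fin.castLE h j := by
  rw [Equiv.symm_apply_eq, finSplitEquiv_castLE]

theorem finSplitEquiv_add (i : Fin (p - k)) (hi : k + i < p) :
    finSplitEquiv h ⟨k + i, hi⟩ = Sum.inr i := by
  rw [finSplitEquiv, Equiv.trans_apply, Equiv.symm_apply_eq]
  exact Fin.ext rfl

theorem finSplitEquiv_symm_inr (i : Fin (p - k)) :
    (finSplitEquiv h).symm (Sum.inr i) = ⟨k + i, by omega⟩ := by
  rw [Equiv.symm_apply_eq, finSplitEquiv_add]

theorem blockX_eq_submatrix (B : Matrix (Fin k) (Fin k) ℝ) (A : Matrix (Fin (p - k)) (Fin k) ℝ) :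
    blockX h B A = (fromBlocks B (-Aᵀ) A 0).submatrix (finSplitEquiv h) (finSplitEquiv h) :=
  rfl

theorem Ipk_eq_submatrix :
    Ipk p k = (fromRows (1 : Matrix (Fin k) (Fin k) ℝ)
      (0 : Matrix (Fin (p - k)) (Fin k) ℝ)).submatrix (finSplitEquiv h) id := by
  ext i j
  obtain ⟨i | i, rfl⟩ := (finSplitEquiv h).symm.surjective i
  · rw [submatrix_apply, Equiv.apply_symm_apply, finSplitEquiv_symm_inl]
    simp [Ipk, Matrix.one_apply, Fin.ext_iff]
  · rw [submatrix_apply, Equiv.apply_symm_apply, finSplitEquiv_symm_inr]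
    simp only [Ipk, of_apply, fromRows_apply_inr, Matrix.zero_apply, ite_eq_right_iff]
    have := j.isLt
    omega

theorem topBlock_submatrix (Q : Matrix (Fin k ⊕ Fin (p - k)) (Fin k) ℝ) :
    topBlock h (Q.submatrix (finSplitEquiv h) id) = Q.toRows₁ := by
  ext i j
  simp [topBlock, finSplitEquiv_castLE]

theorem botBlock_submatrix (Q : Matrix (Fin k ⊕ Fin (p - k)) (Fin k) ℝ) :
    botBlock h (Q.submatrix (finSplitEquiv h) id) = Q.toRows₂ := by
  ext i j
  simp [botBlock, finSplitEquiv_add]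

theorem cayley_submatrix (X : Matrix (Fin k ⊕ Fin (p - k)) (Fin k ⊕ Fin (p - k)) ℝ) :
    cayley p k (X.submatrix (finSplitEquiv h) (finSplitEquiv h)) =
      ((1 + X) * (1 - X)⁻¹ * fromRows (1 : Matrix (Fin k) (Fin k) ℝ)
        (0 : Matrix (Fin (p - k)) (Fin k) ℝ)).submatrix (finSplitEquiv h) id := by
  have h_add : 1 + X.submatrix (finSplitEquiv h) (finSplitEquiv h) =
      (1 + X).submatrix (finSplitEquiv h) (finSplitEquiv h) := by
    rw [← submatrix_one_equiv (finSplitEquiv h)]; rfl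
  have h_sub : 1 - X.submatrix (finSplitEquiv h) (finSplitEquiv h) =
      (1 - X).submatrix (finSplitEquiv h) (finSplitEquiv h) := by
    rw [← submatrix_one_equiv (finSplitEquiv h)]; rfl
  rw [cayley, Ipk_eq_submatrix h, h_add, h_sub, inv_submatrix_equiv, submatrix_mul_equiv,
    submatrix_mul_equiv]

end Reindex

section CayleyBlockX

variable {p k : ℕ} (h : k ≤ p) (A : Matrix (Fin (p - k)) (Fin k) ℝ)

theorem cayley_blockX_zero :
    cayley p k (blockX h 0 A) = (fromRows ((1 - Aᵀ * A) * (1 + Aᵀ * A)⁻¹)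
      ((2 : ℝ) • (A * (1 + Aᵀ * A)⁻¹))).submatrix (finSplitEquiv h) id := by
  rw [blockX_eq_submatrix, cayley_submatrix, ← skewBlock, one_add_skewBlock_mul_inv_mul_fromRows]

theorem topBlock_cayley_blockX_zero :
    topBlock h (cayley p k (blockX h 0 A)) = (1 - Aᵀ * A) * (1 + Aᵀ * A)⁻¹ := by
  rw [cayley_blockX_zero, topBlock_submatrix, toRows₁_fromRows]

theorem botBlock_cayley_blockX_zero :
    botBlock h (cayley p k (blockX h 0 A)) = (2 : ℝ) • (A * (1 + Aᵀ * A)⁻¹) := by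
  rw [cayley_blockX_zero, botBlock_submatrix, toRows₂_fromRows]

theorem isUnit_one_add_topBlock_cayley_blockX_zero :
    IsUnit (1 + topBlock h (cayley p k (blockX h 0 A))) := by
  rw [topBlock_cayley_blockX_zero]
  exact isUnit_one_add_one_sub_mul_inv (isUnit_det_one_add_transpose_mul_self A)

theorem eq_half_smul_botBlock_cayley_blockX_zero_mul :
    A = (1 / 2 : ℝ) • (botBlock h (cayley p k (blockX h 0 A)) *
      (1 + (1 - topBlock h (cayley p k (blockX h 0 A))) *
        (1 + topBlock h (cayley p k (blockX h 0 A)))⁻¹)) := by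
  have hA := isUnit_det_one_add_transpose_mul_self A
  rw [topBlock_cayley_blockX_zero, botBlock_cayley_blockX_zero, one_sub_mul_inv_one_sub_mul_inv hA,
    Matrix.smul_mul, smul_smul, Matrix.mul_assoc, nonsing_inv_mul _ hA, Matrix.mul_one]
  norm_num

end CayleyBlockX

theorem cayley_grassmann_inverse_general (p k : ℕ) (hkp : k < p) :
    (∀ A : Matrix (Fin (p - k)) (Fin k) ℝ, (1 - Aᵀ * A).PosDef →
      IsUnit (1 + topBlock hkp.le (cayley p k (blockX hkp.le 0 A))) ∧
      A = (1 / 2 : ℝ) • (botBlock hkp.le (cayley p k (blockX hkp.le 0 A)) *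
        (1 + (1 - topBlock hkp.le (cayley p k (blockX hkp.le 0 A))) *
          (1 + topBlock hkp.le (cayley p k (blockX hkp.le 0 A)))⁻¹)))
    ∧ ∀ A A' : Matrix (Fin (p - k)) (Fin k) ℝ,
        (1 - Aᵀ * A).PosDef → (1 - A'ᵀ * A').PosDef →
        cayley p k (blockX hkp.le 0 A) = cayley p k (blockX hkp.le 0 A') →
        A = A' := by
  refine ⟨fun A _ => ⟨isUnit_one_add_topBlock_cayley_blockX_zero hkp.le A,
    eq_half_smul_botBlock_cayley_blockX_zero_mul hkp.le A⟩, fun A A' _ _ hQ => ?_⟩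
  rw [eq_half_smul_botBlock_cayley_blockX_zero_mul hkp.le A,
    eq_half_smul_botBlock_cayley_blockX_zero_mul hkp.le A', hQ]

/-- For `A` with `I - AᵀA` positive definite and `Q = C([[0, -Aᵀ],[A, 0]])`
with top block `Q₁` and bottom block `Q₂`: `I + Q₁` is invertible and `A` is
recovered as `A = ½ Q₂ (I + F)` with `F = (I - Q₁)(I + Q₁)⁻¹`.  Consequently
the Cayley transform is injective on such block matrices. -/
theorem cayley_grassmann_inverse (p k : ℕ) (hk : 0 < k) (hkp : k < p) :
    (∀ A : Matrix (Fin (p - k)) (Fin k) ℝ, (1 - Aᵀ * A).PosDef →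
      IsUnit (1 + topBlock hkp.le (cayley p k (blockX hkp.le 0 A))) ∧
      A = (1 / 2 : ℝ) • (botBlock hkp.le (cayley p k (blockX hkp.le 0 A)) *
        (1 + (1 - topBlock hkp.le (cayley p k (blockX hkp.le 0 A))) *
          (1 + topBlock hkp.le (cayley p k (blockX hkp.le 0 A)))⁻¹)))
    ∧ ∀ A A' : Matrix (Fin (p - k)) (Fin k) ℝ,
        (1 - Aᵀ * A).PosDef → (1 - A'ᵀ * A').PosDef →
        cayley p k (blockX hkp.le 0 A) = cayley p k (blockX hkp.le 0 A') →
        A = A' :=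
  cayley_grassmann_inverse_general p k hkp

end
end

section
/- Let Q₁ be a real k×k matrix with k‖Q₁‖_max < 1, let F = (I_k − Q₁)(I_k + Q₁)⁻¹ (which is defined since ‖Q₁‖_F ≤ k‖Q₁‖_max < 1 makes I_k + Q₁ invertible), and let B = ½(Fᵀ − F). Then ‖(Q₁ − Q₁ᵀ) − B‖_max ≤ 2 k² ‖Q₁‖²_max / (1 − k‖Q₁‖_max). -/
/-! With `R = (1 + Q₁)⁻¹` one has `F = 2R - 1`, so `B = Rᵀ - R`, and the Neumann-type identity
`R = 1 - Q₁ + Q₁²R` turns `(Q₁ - Q₁ᵀ) - B` into `Q₁²R - (Q₁²R)ᵀ`. Entrywise,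
`‖Q₁²R‖_max ≤ k²‖Q₁‖²_max ‖R‖_max`, and `R = 1 - Q₁R` gives `‖R‖_max ≤ 1 + k‖Q₁‖_max ‖R‖_max`,
i.e. `‖R‖_max ≤ 1 / (1 - k‖Q₁‖_max)`. Invertibility of `1 + Q₁` is strict diagonal dominance. -/

open Matrix MeasureTheory Filter
open scoped Kronecker ENNReal

noncomputable section

section maxNorm

variable {a b c : ℕ}

lemma abs_apply_le_maxNorm (M : Matrix (Fin a) (Fin b) ℝ) (i : Fin a) (j : Fin b) :
    |M i j| ≤ maxNorm M :=
  le_ciSup (f := fun q : Fin a × Fin b => |M q.1 q.2|) (Set.finite_range _).bddAbove (i, j)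

lemma maxNorm_nonneg (M : Matrix (Fin a) (Fin b) ℝ) : 0 ≤ maxNorm M :=
  Real.iSup_nonneg fun _ => abs_nonneg _

lemma maxNorm_le {M : Matrix (Fin a) (Fin b) ℝ} {r : ℝ} (h : ∀ i j, |M i j| ≤ r)
    (hr : 0 ≤ r) : maxNorm M ≤ r :=
  Real.iSup_le (fun q => h q.1 q.2) hr

lemma maxNorm_transpose (M : Matrix (Fin a) (Fin b) ℝ) : maxNorm Mᵀ = maxNorm M :=
  le_antisymm (maxNorm_le (fun i j => abs_apply_le_maxNorm M j i) (maxNorm_nonneg M))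
    (maxNorm_le (fun i j => abs_apply_le_maxNorm Mᵀ j i) (maxNorm_nonneg Mᵀ))

lemma maxNorm_sub_le (M N : Matrix (Fin a) (Fin b) ℝ) :
    maxNorm (M - N) ≤ maxNorm M + maxNorm N :=
  maxNorm_le (fun i j => (abs_sub (M i j) (N i j)).trans
      (add_le_add (abs_apply_le_maxNorm M i j) (abs_apply_le_maxNorm N i j)))
    (add_nonneg (maxNorm_nonneg M) (maxNorm_nonneg N))

lemma maxNorm_sub_transpose_le (M : Matrix (Fin a) (Fin a) ℝ) :
    maxNorm (M - Mᵀ) ≤ 2 * maxNorm M := by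
  linarith [maxNorm_sub_le M Mᵀ, maxNorm_transpose M]

lemma maxNorm_one_le : maxNorm (1 : Matrix (Fin a) (Fin a) ℝ) ≤ 1 :=
  maxNorm_le (fun i j => by rw [one_apply]; split_ifs <;> simp) zero_le_one

lemma sum_abs_apply_le_mul_maxNorm (M : Matrix (Fin a) (Fin b) ℝ) (i : Fin a) :
    ∑ j, |M i j| ≤ b * maxNorm M := by
  simpa using Finset.sum_le_sum fun j (_ : j ∈ Finset.univ) => abs_apply_le_maxNorm M i j

lemma maxNorm_mul_le (M : Matrix (Fin a) (Fin b) ℝ) (N : Matrix (Fin b) (Fin c) ℝ) :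
    maxNorm (M * N) ≤ b * maxNorm M * maxNorm N := by
  have := maxNorm_nonneg M
  have := maxNorm_nonneg N
  refine maxNorm_le (fun i j => ?_) (by positivity)
  calc |(M * N) i j| ≤ ∑ l, |M i l| * |N l j| := by
        simpa only [mul_apply, abs_mul] using
          Finset.abs_sum_le_sum_abs (fun l => M i l * N l j) Finset.univ
    _ ≤ ∑ l, |M i l| * maxNorm N :=
        Finset.sum_le_sum fun l _ => mul_le_mul_of_nonneg_left (abs_apply_le_maxNorm N l j)
          (abs_nonneg _)
    _ ≤ b * maxNorm M * maxNorm N := by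
        rw [← Finset.sum_mul]
        exact mul_le_mul_of_nonneg_right (sum_abs_apply_le_mul_maxNorm M i) (maxNorm_nonneg N)

end maxNorm

lemma mul_inv_one_add_eq {n R : Type*} [Fintype n] [DecidableEq n] [CommRing R]
    {Q : Matrix n n R} (hQ : IsUnit (1 + Q)) : Q * (1 + Q)⁻¹ = 1 - (1 + Q)⁻¹ := by
  have := mul_nonsing_inv (1 + Q) ((isUnit_iff_isUnit_det _).mp hQ)
  rw [add_mul, one_mul] at this
  exact eq_sub_of_add_eq' this

section oneAdd

variable {k : ℕ} {Q : Matrix (Fin k) (Fin k) ℝ}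

lemma isUnit_one_add_of_mul_maxNorm_lt_one (h : (k : ℝ) * maxNorm Q < 1) : IsUnit (1 + Q) := by
  refine (isUnit_iff_isUnit_det _).mpr (det_ne_zero_of_sum_row_lt_diag fun i => ?_).isUnit
  have hoff : ∑ j ∈ Finset.univ.erase i, ‖(1 + Q) i j‖ = ∑ j, |Q i j| - |Q i i| :=
    calc ∑ j ∈ Finset.univ.erase i, ‖(1 + Q) i j‖ = ∑ j ∈ Finset.univ.erase i, |Q i j| :=
          Finset.sum_congr rfl fun j hj => by
            rw [Matrix.add_apply, one_apply_ne' (Finset.ne_of_mem_erase hj), zero_add,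
              Real.norm_eq_abs]
      _ = ∑ j, |Q i j| - |Q i i| := Finset.sum_erase_eq_sub (Finset.mem_univ i)
  have hdiag : 1 - |Q i i| ≤ ‖(1 + Q) i i‖ := by
    rw [Matrix.add_apply, one_apply_eq, Real.norm_eq_abs]
    linarith [le_abs_self (1 + Q i i), neg_abs_le (Q i i)]
  linarith [sum_abs_apply_le_mul_maxNorm Q i]

lemma maxNorm_inv_one_add_le (h : (k : ℝ) * maxNorm Q < 1) :
    maxNorm (1 + Q)⁻¹ ≤ (1 - k * maxNorm Q)⁻¹ := by
  set R := (1 + Q)⁻¹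
  have hR : R = 1 - Q * R := by
    rw [mul_inv_one_add_eq (isUnit_one_add_of_mul_maxNorm_lt_one h), sub_sub_cancel]
  have hRle : maxNorm R ≤ 1 + k * maxNorm Q * maxNorm R :=
    calc maxNorm R = maxNorm (1 - Q * R) := by rw [← hR]
      _ ≤ 1 + k * maxNorm Q * maxNorm R :=
        (maxNorm_sub_le _ _).trans (add_le_add maxNorm_one_le (maxNorm_mul_le Q R))
  rw [← one_div, le_div_iff₀ (by linarith)]
  linarith

end oneAdd

lemma sub_transpose_sub_half_cayley_eq {n : Type*} [Fintype n] [DecidableEq n]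
    {Q : Matrix n n ℝ} (hQ : IsUnit (1 + Q)) :
    (Q - Qᵀ) - (1 / 2 : ℝ) • (((1 - Q) * (1 + Q)⁻¹)ᵀ - (1 - Q) * (1 + Q)⁻¹)
      = Q * Q * (1 + Q)⁻¹ - (Q * Q * (1 + Q)⁻¹)ᵀ := by
  have hQR := mul_inv_one_add_eq hQ
  set R := (1 + Q)⁻¹
  have hF : (1 - Q) * R = (2 : ℝ) • R - 1 := by
    rw [sub_mul, one_mul, hQR]
    module
  have hQQR : Q * Q * R = Q + R - 1 := by
    rw [mul_assoc, hQR, mul_sub, mul_one, hQR]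
    abel
  rw [hF, hQQR]
  simp only [transpose_sub, transpose_add, transpose_smul, transpose_one]
  module

theorem B_approx_bound_general (k : ℕ) (Q₁ : Matrix (Fin k) (Fin k) ℝ)
    (h : (k : ℝ) * maxNorm Q₁ < 1) :
    IsUnit (1 + Q₁) ∧
    maxNorm ((Q₁ - Q₁ᵀ) -
        (1 / 2 : ℝ) • (((1 - Q₁) * (1 + Q₁)⁻¹)ᵀ - (1 - Q₁) * (1 + Q₁)⁻¹))
      ≤ 2 * (k : ℝ) ^ 2 * (maxNorm Q₁) ^ 2 / (1 - (k : ℝ) * maxNorm Q₁) := by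
  have hu := isUnit_one_add_of_mul_maxNorm_lt_one h
  refine ⟨hu, ?_⟩
  rw [sub_transpose_sub_half_cayley_eq hu]
  have hR := maxNorm_inv_one_add_le h
  set R := (1 + Q₁)⁻¹
  set m := maxNorm Q₁
  have hm : 0 ≤ m := maxNorm_nonneg Q₁
  calc maxNorm (Q₁ * Q₁ * R - (Q₁ * Q₁ * R)ᵀ)
      ≤ 2 * maxNorm (Q₁ * Q₁ * R) := maxNorm_sub_transpose_le _
    _ ≤ 2 * (k * maxNorm (Q₁ * Q₁) * maxNorm R) := by gcongr; exact maxNorm_mul_le _ _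
    _ ≤ 2 * (k * (k * m * m) * maxNorm R) := by
        gcongr
        · exact maxNorm_nonneg R
        · exact maxNorm_mul_le Q₁ Q₁
    _ ≤ 2 * (k * (k * m * m) * (1 - k * m)⁻¹) := by gcongr
    _ = _ := by ring

/-- Bound on the error of the linear approximation `Q₁ - Q₁ᵀ` to
`B = ½(Fᵀ - F)`, where `F = (I - Q₁)(I + Q₁)⁻¹`, when `k‖Q₁‖_max < 1`. -/
theorem B_approx_bound (k : ℕ) (hk : 0 < k) (Q₁ : Matrix (Fin k) (Fin k) ℝ)
    (h : (k : ℝ) * maxNorm Q₁ < 1) :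
    IsUnit (1 + Q₁) ∧
    maxNorm ((Q₁ - Q₁ᵀ) -
        (1 / 2 : ℝ) • (((1 - Q₁) * (1 + Q₁)⁻¹)ᵀ - (1 - Q₁) * (1 + Q₁)⁻¹))
      ≤ 2 * (k : ℝ) ^ 2 * (maxNorm Q₁) ^ 2 / (1 - (k : ℝ) * maxNorm Q₁) :=
  B_approx_bound_general k Q₁ h

end
end
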